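/- arXiv:0810.5027 — 4 statements merged into one kernel-verified Lean document; each statement's English description precedes it below -/
import Mathlib

section
/- Let T ≥ 0 and let u be a continuous nonnegative function on the closure of B₁ ∩ {x ∈ ℝ³ : x₃ > −T}, where B₁ is the open unit ball of ℝ³ centered at 0. Then for every a > 0 there exists a point x in B₁ with x₃ ≥ −T such that, setting σ = (1 − |x|)/2, one has u(x) ≥ 2^{−a} · max{u(z) : z ∈ closed ball B(x,σ), z₃ ≥ −T} and σ^a u(x) ≥ 2^{−a} u(0). -/
open Metric Set MeasureTheory

noncomputable section

abbrev E3 := EuclideanSpace ℝ (Fin 3)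

/-- The Euclidean Laplacian on ℝ³. -/
noncomputable def lap (u : E3 → ℝ) (x : E3) : ℝ :=
  ∑ i : Fin 3, fderiv ℝ (fun y => fderiv ℝ u y (EuclideanSpace.single i 1)) x
    (EuclideanSpace.single i 1)

/-- The third standard basis vector of ℝ³. -/
noncomputable def e3 : E3 := EuclideanSpace.single 2 1

/-!
Maximize the weighted function `(1 - ‖y‖) ^ a * u y` over the compact closure `K` of the
domain. If the maximum is attained at a point `x` of the open ball, then with
`σ = (1 - ‖x‖) / 2` every `z ∈ B(x, σ)` has `1 - ‖z‖ ≥ σ`, so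
`σ ^ a * u z ≤ (1 - ‖x‖) ^ a * u x = 2 ^ a * σ ^ a * u x`; comparing with the value at `0`
gives the second inequality. If it is attained only on the unit sphere, the maximum is `0`,
and then `0` is a maximizer too.
-/

theorem two_rpow_neg_mul_rpow {t : ℝ} (ht : 0 ≤ t) (a : ℝ) :
    (2 : ℝ) ^ (-a) * t ^ a = (t / 2) ^ a := by
  rw [Real.div_rpow ht zero_le_two, Real.rpow_neg zero_le_two, inv_mul_eq_div]

theorem PiLp.inter_halfSpace_subset_closure {n : ℕ} (p : ENNReal) (c : ℝ) (i : Fin n)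
    {U : Set (PiLp p fun _ : Fin n ↦ ℝ)} (hU : IsOpen U) :
    U ∩ {y | c ≤ y i} ⊆ closure (U ∩ {y | c < y i}) := by
  rw [← closure_open_halfSpace]
  exact hU.inter_closure

section WeightedMax

variable {E : Type*} [SeminormedAddCommGroup E] {K : Set E} {u : E → ℝ} {a : ℝ} {x : E}

theorem exists_norm_lt_one_isMaxOn_weight (hK : IsCompact K) (hK1 : K ⊆ closedBall 0 1)
    (h0 : (0 : E) ∈ K) (hu : ContinuousOn u K) (hu0 : 0 ≤ u 0) (ha : 0 < a) :
    ∃ x ∈ K, ‖x‖ < 1 ∧ IsMaxOn (fun y ↦ (1 - ‖y‖) ^ a * u y) K x := by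
  have hcont : ContinuousOn (fun y ↦ (1 - ‖y‖) ^ a * u y) K :=
    ((continuous_const.sub continuous_norm).rpow_const fun _ ↦ Or.inr ha.le).continuousOn.mul hu
  obtain ⟨x₀, hx₀, hmax⟩ := hK.exists_isMaxOn ⟨0, h0⟩ hcont
  by_cases hx₀1 : ‖x₀‖ < 1
  · exact ⟨x₀, hx₀, hx₀1, hmax⟩
  have hnorm : ‖x₀‖ = 1 := le_antisymm (mem_closedBall_zero_iff.1 (hK1 hx₀)) (not_lt.1 hx₀1)
  refine ⟨0, h0, by simp, fun z hz ↦ ?_⟩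
  calc (1 - ‖z‖) ^ a * u z ≤ (1 - ‖x₀‖) ^ a * u x₀ := hmax hz
    _ = 0 := by rw [hnorm, sub_self, Real.zero_rpow ha.ne', zero_mul]
    _ ≤ (1 - ‖(0 : E)‖) ^ a * u 0 := by simpa using hu0

theorem IsMaxOn.two_rpow_neg_mul_le_of_dist_le
    (hmax : IsMaxOn (fun y ↦ (1 - ‖y‖) ^ a * u y) K x) (ha : 0 ≤ a) (hx : ‖x‖ < 1) {z : E}
    (hz : z ∈ K) (hzx : dist z x ≤ (1 - ‖x‖) / 2) (huz : 0 ≤ u z) :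
    (2 : ℝ) ^ (-a) * u z ≤ u x := by
  set σ := (1 - ‖x‖) / 2
  have hσ : 0 < σ := by simp only [σ]; linarith
  have hσz : σ ≤ 1 - ‖z‖ := by
    have := norm_le_insert' z x
    rw [← dist_eq_norm] at this
    simp only [σ] at hzx ⊢
    linarith
  have key : σ ^ a * ((2 : ℝ) ^ (-a) * u z) ≤ σ ^ a * u x :=
    calc σ ^ a * ((2 : ℝ) ^ (-a) * u z) = (2 : ℝ) ^ (-a) * (σ ^ a * u z) := by ring
      _ ≤ (2 : ℝ) ^ (-a) * ((1 - ‖z‖) ^ a * u z) := by gcongr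
      _ ≤ (2 : ℝ) ^ (-a) * ((1 - ‖x‖) ^ a * u x) :=
        mul_le_mul_of_nonneg_left (hmax hz) (by positivity)
      _ = σ ^ a * u x := by rw [← mul_assoc, two_rpow_neg_mul_rpow (by linarith)]
  exact le_of_mul_le_mul_left key (Real.rpow_pos_of_pos hσ a)

theorem IsMaxOn.two_rpow_neg_mul_apply_zero_le
    (hmax : IsMaxOn (fun y ↦ (1 - ‖y‖) ^ a * u y) K x) (hx : ‖x‖ ≤ 1) (h0 : (0 : E) ∈ K) :
    (2 : ℝ) ^ (-a) * u 0 ≤ ((1 - ‖x‖) / 2) ^ a * u x :=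
  calc (2 : ℝ) ^ (-a) * u 0 = (2 : ℝ) ^ (-a) * ((1 - ‖(0 : E)‖) ^ a * u 0) := by simp
    _ ≤ (2 : ℝ) ^ (-a) * ((1 - ‖x‖) ^ a * u x) :=
        mul_le_mul_of_nonneg_left (hmax h0) (by positivity)
    _ = ((1 - ‖x‖) / 2) ^ a * u x := by rw [← mul_assoc, two_rpow_neg_mul_rpow (by linarith)]

end WeightedMax

/-- Lemma f6lem4 (the Calculus selection lemma). -/
theorem stmt3 (T : ℝ) (hT : 0 ≤ T) (u : E3 → ℝ)
    (hcont : ContinuousOn u (closure (ball (0 : E3) 1 ∩ {x : E3 | -T < x 2})))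
    (hnonneg : ∀ x ∈ closure (ball (0 : E3) 1 ∩ {x : E3 | -T < x 2}), 0 ≤ u x) :
    ∀ a : ℝ, 0 < a →
      ∃ x : E3, ‖x‖ < 1 ∧ -T ≤ x 2 ∧
        (∀ z ∈ closedBall x ((1 - ‖x‖) / 2), -T ≤ z 2 → (2 : ℝ) ^ (-a) * u z ≤ u x) ∧
        (2 : ℝ) ^ (-a) * u 0 ≤ ((1 - ‖x‖) / 2) ^ a * u x := by
  intro a ha
  set K := closure (ball (0 : E3) 1 ∩ {x : E3 | -T < x 2})
  have hKsub : K ⊆ closedBall 0 1 ∩ {x | -T ≤ x 2} := by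
    refine (closure_inter_subset_inter_closure _ _).trans ?_
    rw [closure_ball _ one_ne_zero, closure_open_halfSpace]
  have hKsup : ball 0 1 ∩ {x : E3 | -T ≤ x 2} ⊆ K :=
    PiLp.inter_halfSpace_subset_closure 2 (-T) 2 isOpen_ball
  have h0 : (0 : E3) ∈ K := hKsup ⟨mem_ball_self one_pos, by simpa using hT⟩
  have hK : IsCompact K := (isBounded_ball.subset inter_subset_left).isCompact_closure
  obtain ⟨x, hxK, hx1, hmax⟩ := exists_norm_lt_one_isMaxOn_weight hK
    (fun y hy ↦ (hKsub hy).1) h0 hcont (hnonneg 0 h0) ha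
  refine ⟨x, hx1, (hKsub hxK).2, fun z hz hzT ↦ ?_,
    hmax.two_rpow_neg_mul_apply_zero_le hx1.le h0⟩
  have hzball : z ∈ ball (0 : E3) 1 :=
    closedBall_subset_ball' (by rw [dist_zero_right]; linarith) hz
  have hzK : z ∈ K := hKsup ⟨hzball, hzT⟩
  exact hmax.two_rpow_neg_mul_le_of_dist_le ha.le hx1 hzK hz (hnonneg z hzK)
end
end

section
/- Let λ > 0, let U ⊂ ℝ³ be open, and let v be a C¹ function on U. Let y ∈ ℝ³ with y ≠ 0 and y₃ = 0 be such that y^λ := λ²y/|y|² ∈ U (note that (y^λ)₃ = 0). Then the Kelvin transform v^λ(z) = (λ/|z|) v(λ²z/|z|²) is differentiable at y and ∂(v^λ)/∂y₃ (y) = (λ/|y|)³ · ∂v/∂x₃ (y^λ). In particular, if c : ℝ³ → ℝ is such that ∂v/∂x₃(y^λ) = c(y^λ) v(y^λ)³, then ∂(v^λ)/∂y₃(y) = c(y^λ) v^λ(y)³. -/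
open Metric Set MeasureTheory

noncomputable section

/-!
The Kelvin transform is `v^λ = ρ · (v ∘ ι)` with the radial factor `ρ z = λ / ‖z‖` and the
inversion `ι` in the sphere of radius `λ` about the origin. The derivative of `ι` at `y` is
`(λ / ‖y‖)²` times the reflection in `y^⊥`, so it acts as a pure dilation on directions
orthogonal to `y`, while the derivative of the radial factor vanishes on them. For such a
direction `h` (for instance `e₃` when `y₃ = 0`) the product rule leaves
`∂_h v^λ (y) = (λ / ‖y‖)³ ∂_h v (y^λ)`.
-/

open EuclideanGeometry

section Kelvin

variable {F : Type*} [NormedAddCommGroup F] [InnerProductSpace ℝ F]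

def kelvin (lam : ℝ) (v : F → ℝ) (z : F) : ℝ :=
  (lam / ‖z‖) * v ((lam ^ 2 / ‖z‖ ^ 2) • z)

theorem inversion_zero_apply (R : ℝ) (x : F) : inversion 0 R x = (R ^ 2 / ‖x‖ ^ 2) • x := by
  simp [inversion, div_pow]

theorem hasFDerivAt_comp_norm_sq {φ : ℝ → ℝ} {y : F} (hφ : DifferentiableAt ℝ φ (‖y‖ ^ 2)) :
    HasFDerivAt (fun z : F => φ (‖z‖ ^ 2)) (deriv φ (‖y‖ ^ 2) • 2 • innerSL ℝ y) y :=
  hφ.hasDerivAt.comp_hasFDerivAt y (hasStrictFDerivAt_norm_sq y).hasFDerivAt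

variable {lam : ℝ} {v : F → ℝ} {y : F}

theorem hasFDerivAt_kelvin (hy : y ≠ 0) (hv : DifferentiableAt ℝ v (inversion 0 lam y)) :
    HasFDerivAt (kelvin lam v)
      ((lam / ‖y‖) • (fderiv ℝ v (inversion 0 lam y)).comp
          ((lam / ‖y‖) ^ 2 • ((ℝ ∙ y)ᗮ.reflection : F →L[ℝ] F)) +
        v (inversion 0 lam y) •
          deriv (fun t => lam / √t) (‖y‖ ^ 2) • 2 • innerSL ℝ y) y := by
  have hρ : HasFDerivAt (fun z : F => lam / ‖z‖)
      (deriv (fun t => lam / √t) (‖y‖ ^ 2) • 2 • innerSL ℝ y) y := by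
    -- `λ / ‖z‖` is a function of `‖z‖²`, whose derivative at `y` is `2 ⟪y, ·⟫`.
    have hsqrt : (fun z : F => lam / √(‖z‖ ^ 2)) = fun z => lam / ‖z‖ := by
      simp only [Real.sqrt_sq (norm_nonneg _)]
    rw [← hsqrt]
    exact hasFDerivAt_comp_norm_sq (φ := fun t => lam / √t) (by fun_prop (disch := positivity))
  have hinv : HasFDerivAt (inversion 0 lam)
      ((lam / ‖y‖) ^ 2 • ((ℝ ∙ y)ᗮ.reflection : F →L[ℝ] F)) y := by
    simpa using hasFDerivAt_inversion (c := (0 : F)) (R := lam) hy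
  have hkelvin : kelvin lam v = (fun z : F => lam / ‖z‖) * (v ∘ inversion 0 lam) := by
    ext z
    simp [kelvin, inversion_zero_apply]
  rw [hkelvin]
  exact hρ.mul (hv.hasFDerivAt.comp y hinv)

theorem fderiv_kelvin_apply_of_inner_eq_zero (hy : y ≠ 0)
    (hv : DifferentiableAt ℝ v (inversion 0 lam y)) {h : F} (hh : inner ℝ y h = 0) :
    fderiv ℝ (kelvin lam v) y h = (lam / ‖y‖) ^ 3 * fderiv ℝ v (inversion 0 lam y) h := by
  have hh_perp : h ∈ (ℝ ∙ y)ᗮ := Submodule.mem_orthogonal_singleton_iff_inner_right.2 hh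
  simp [(hasFDerivAt_kelvin hy hv).fderiv, hh, Submodule.reflection_mem_subspace_eq_self hh_perp]
  ring

end Kelvin

theorem inner_e3 (y : E3) : inner ℝ y e3 = y 2 := by
  simp [e3, EuclideanSpace.inner_single_right]

theorem stmt5_general (lam : ℝ) (U : Set E3) (hU : IsOpen U)
    (v : E3 → ℝ) (hv : ContDiffOn ℝ 1 v U)
    (y : E3) (hy : y ≠ 0) (hy3 : y 2 = 0) (hyU : (lam ^ 2 / ‖y‖ ^ 2) • y ∈ U) :
    DifferentiableAt ℝ (fun z : E3 => (lam / ‖z‖) * v ((lam ^ 2 / ‖z‖ ^ 2) • z)) y ∧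
    fderiv ℝ (fun z : E3 => (lam / ‖z‖) * v ((lam ^ 2 / ‖z‖ ^ 2) • z)) y e3 =
      (lam / ‖y‖) ^ 3 * fderiv ℝ v ((lam ^ 2 / ‖y‖ ^ 2) • y) e3 ∧
    ∀ c : E3 → ℝ,
      fderiv ℝ v ((lam ^ 2 / ‖y‖ ^ 2) • y) e3 =
        c ((lam ^ 2 / ‖y‖ ^ 2) • y) * v ((lam ^ 2 / ‖y‖ ^ 2) • y) ^ 3 →
      fderiv ℝ (fun z : E3 => (lam / ‖z‖) * v ((lam ^ 2 / ‖z‖ ^ 2) • z)) y e3 =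
        c ((lam ^ 2 / ‖y‖ ^ 2) • y) *
          ((lam / ‖y‖) * v ((lam ^ 2 / ‖y‖ ^ 2) • y)) ^ 3 := by
  change DifferentiableAt ℝ (kelvin lam v) y ∧ fderiv ℝ (kelvin lam v) y e3 = _ ∧
    ∀ c : E3 → ℝ, _ → fderiv ℝ (kelvin lam v) y e3 = _
  rw [← inversion_zero_apply] at hyU ⊢
  have hv' : DifferentiableAt ℝ v (inversion 0 lam y) :=
    (hv.contDiffAt (hU.mem_nhds hyU)).differentiableAt one_ne_zero
  have hnormal := fderiv_kelvin_apply_of_inner_eq_zero hy hv' ((inner_e3 y).trans hy3)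
  refine ⟨(hasFDerivAt_kelvin hy hv').differentiableAt, hnormal, fun c hc => ?_⟩
  rw [hnormal, hc]
  ring

/-- The normal derivative of the Kelvin transform on the flat boundary. -/
theorem stmt5 (lam : ℝ) (hlam : 0 < lam) (U : Set E3) (hU : IsOpen U)
    (v : E3 → ℝ) (hv : ContDiffOn ℝ 1 v U)
    (y : E3) (hy : y ≠ 0) (hy3 : y 2 = 0) (hyU : (lam ^ 2 / ‖y‖ ^ 2) • y ∈ U) :
    DifferentiableAt ℝ (fun z : E3 => (lam / ‖z‖) * v ((lam ^ 2 / ‖z‖ ^ 2) • z)) y ∧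
    fderiv ℝ (fun z : E3 => (lam / ‖z‖) * v ((lam ^ 2 / ‖z‖ ^ 2) • z)) y e3 =
      (lam / ‖y‖) ^ 3 * fderiv ℝ v ((lam ^ 2 / ‖y‖ ^ 2) • y) e3 ∧
    ∀ c : E3 → ℝ,
      fderiv ℝ v ((lam ^ 2 / ‖y‖ ^ 2) • y) e3 =
        c ((lam ^ 2 / ‖y‖ ^ 2) • y) * v ((lam ^ 2 / ‖y‖ ^ 2) • y) ^ 3 →
      fderiv ℝ (fun z : E3 => (lam / ‖z‖) * v ((lam ^ 2 / ‖z‖ ^ 2) • z)) y e3 =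
        c ((lam ^ 2 / ‖y‖ ^ 2) • y) *
          ((lam / ‖y‖) * v ((lam ^ 2 / ‖y‖ ^ 2) • y)) ^ 3 :=
  stmt5_general lam U hU v hv y hy hy3 hyU
end
end

section
/- Let A > 0 and define φ(y) = 1 − A^{1/4}|y + |y|e₃|^{−1/4} for y ∈ ℝ³ with y₃ > 0, where e₃ = (0,0,1). Then for every y with y₃ > 0 and φ(y) > 0, the function φ² is twice differentiable at y and Δ(φ²)(y) ≥ (1/50) A^{1/2} |y|^{−5/2}. -/
open Metric Set MeasureTheory

noncomputable section

/-!
Put `r = ‖y‖`, `u = y₃`, `c = A^{1/4}` and `W = ‖y + ‖y‖e₃‖² = 2r² + 2ru`. On `y₃ > 0` we have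
`φ² = g ∘ W` with `g t = (1 - c t^{-1/8})²`, so `Δ(φ²) = g''(W) ‖∇W‖² + g'(W) ΔW`, where
`‖∇W‖² = 4(5r + 3u)(r + u)` and `ΔW = 4(3r + 2u)/r`. With `p = c W^{-1/8}` this is
`p (5r + 3u + (1 - p)(2u - 2r)) / (16 r W) ≥ 3p / (16 W)`, because `0 ≤ u ≤ r` and `p ≥ 0`.
Finally `φ(y) > 0` says `c < W^{1/8}`, and `W ≤ 4r²` turns `3p / (16 W)` into the claimed
`A^{1/2} r^{-5/2} / 50`.
-/

open scoped RealInnerProductSpace Topology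

theorem fderiv_fderiv_comp_apply {E : Type*} [NormedAddCommGroup E] [NormedSpace ℝ E]
    {g : ℝ → ℝ} {w : E → ℝ} {y : E} (hg : ContDiffAt ℝ 2 g (w y)) (hw : ContDiffAt ℝ 2 w y)
    (v : E) :
    fderiv ℝ (fun z => fderiv ℝ (g ∘ w) z v) y v =
      deriv (deriv g) (w y) * fderiv ℝ w y v ^ 2 +
        deriv g (w y) * fderiv ℝ (fun z => fderiv ℝ w z v) y v := by
  have hg' : DifferentiableAt ℝ (deriv g) (w y) :=
    ((hg.fderiv_right (m := 1) le_rfl).clm_apply contDiffAt_const).differentiableAt_one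
  have hw' : DifferentiableAt ℝ (fun z => fderiv ℝ w z v) y :=
    ((hw.fderiv_right (m := 1) le_rfl).clm_apply contDiffAt_const).differentiableAt_one
  have hchain : (fun z => fderiv ℝ (g ∘ w) z v) =ᶠ[𝓝 y]
      fun z => deriv g (w z) * fderiv ℝ w z v := by
    filter_upwards [hw.continuousAt.eventually (hg.eventually (by simp)), hw.eventually (by simp)]
      with z hgz hwz
    rw [fderiv_comp z (hgz.differentiableAt (by simp)) (hwz.differentiableAt (by simp))]
    simp [fderiv_eq_smul_deriv, mul_comm]
  have hprod : HasFDerivAt (fun z => deriv g (w z) * fderiv ℝ w z v) _ y :=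
    (hg'.hasDerivAt.comp_hasFDerivAt y (hw.differentiableAt (by simp)).hasFDerivAt).mul
      hw'.hasFDerivAt
  rw [hchain.fderiv_eq, hprod.fderiv]
  simp only [Function.comp_apply, add_apply, smul_apply, smul_eq_mul]
  ring

theorem hasFDerivAt_norm_of_ne_zero {F : Type*} [NormedAddCommGroup F] [InnerProductSpace ℝ F]
    {x : F} (hx : x ≠ 0) : HasFDerivAt (fun x : F => ‖x‖) (‖x‖⁻¹ • innerSL ℝ x) x := by
  have hsqrt := (Real.hasDerivAt_sqrt (by positivity : ‖x‖ ^ 2 ≠ 0)).comp_hasFDerivAt x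
    (hasStrictFDerivAt_norm_sq x).hasFDerivAt
  simp only [Function.comp_def, Real.sqrt_sq (norm_nonneg _)] at hsqrt
  refine hsqrt.congr_fderiv ?_
  ext v
  simp only [one_div, mul_inv_rev, smul_apply, coe_innerSL_apply, nsmul_eq_mul,
    Nat.cast_ofNat, smul_eq_mul]
  ring

open EuclideanSpace in
theorem sum_fderiv_single_sq {ι : Type*} [Fintype ι] [DecidableEq ι]
    {f : EuclideanSpace ℝ ι → ℝ} {x g : EuclideanSpace ℝ ι} (hf : HasFDerivAt f (innerSL ℝ g) x) :
    ∑ i, fderiv ℝ f x (single i 1) ^ 2 = ‖g‖ ^ 2 := by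
  simp [hf.fderiv, inner_single_right, norm_sq_eq]

theorem Filter.EventuallyEq.lap_eq {u v : E3 → ℝ} {y : E3} (h : u =ᶠ[𝓝 y] v) :
    lap u y = lap v y := by
  refine Finset.sum_congr rfl fun i _ => ?_
  congr 1
  refine Filter.EventuallyEq.fderiv_eq ?_
  filter_upwards [h.eventuallyEq_nhds] with z hz
  rw [hz.fderiv_eq]

theorem lap_comp {g : ℝ → ℝ} {w : E3 → ℝ} {y : E3} (hg : ContDiffAt ℝ 2 g (w y))
    (hw : ContDiffAt ℝ 2 w y) :
    lap (g ∘ w) y = deriv (deriv g) (w y) * ∑ i, fderiv ℝ w y (EuclideanSpace.single i 1) ^ 2 +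
      deriv g (w y) * lap w y := by
  simp only [lap, fderiv_fderiv_comp_apply hg hw, Finset.sum_add_distrib, Finset.mul_sum]

def shiftNormSq (z : E3) : ℝ := 2 * ‖z‖ ^ 2 + 2 * ‖z‖ * z 2

def shiftNormSqGrad (z : E3) : E3 := (4 + 2 * z 2 / ‖z‖) • z + (2 * ‖z‖) • e3

theorem e3_inner (z : E3) : ⟪e3, z⟫ = z 2 := by
  simp [e3, EuclideanSpace.inner_single_left]

theorem norm_e3 : ‖e3‖ = 1 := by
  simp [e3]

theorem norm_add_norm_smul_e3_sq (z : E3) : ‖z + ‖z‖ • e3‖ ^ 2 = shiftNormSq z := by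
  rw [norm_add_sq_real, real_inner_smul_right, real_inner_comm, e3_inner, norm_smul, norm_e3,
    shiftNormSq]
  simp only [norm_norm, mul_one]
  ring

theorem norm_add_norm_smul_e3_rpow (z : E3) :
    ‖z + ‖z‖ • e3‖ ^ (-(1 / 4) : ℝ) = shiftNormSq z ^ (-(1 / 8) : ℝ) := by
  rw [← norm_add_norm_smul_e3_sq, ← Real.rpow_two, ← Real.rpow_mul (norm_nonneg _)]
  norm_num

theorem shiftNormSq_pos {z : E3} (hz : 0 < z 2) : 0 < shiftNormSq z := by
  have : 0 < ‖z‖ := (abs_pos_of_pos hz).trans_le (PiLp.norm_apply_le z 2)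
  unfold shiftNormSq
  positivity

theorem contDiffAt_shiftNormSq {z : E3} (hz : z ≠ 0) : ContDiffAt ℝ 2 shiftNormSq z :=
  (contDiffAt_const.mul (contDiff_norm_sq ℝ).contDiffAt).add
    ((contDiffAt_const.mul (contDiffAt_norm ℝ hz)).mul
      (EuclideanSpace.proj (2 : Fin 3) : E3 →L[ℝ] ℝ).contDiff.contDiffAt)

theorem hasFDerivAt_shiftNormSq {z : E3} (hz : z ≠ 0) :
    HasFDerivAt shiftNormSq (innerSL ℝ (shiftNormSqGrad z)) z := by
  have h := (((hasStrictFDerivAt_norm_sq z).hasFDerivAt.const_mul 2).add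
    (((hasFDerivAt_norm_of_ne_zero hz).const_mul 2).mul
      (EuclideanSpace.proj (2 : Fin 3) : E3 →L[ℝ] ℝ).hasFDerivAt))
  refine h.congr_fderiv ?_
  ext v
  simp only [PiLp.proj_apply, add_apply, smul_apply, coe_innerSL_apply, nsmul_eq_mul,
    Nat.cast_ofNat, smul_eq_mul, shiftNormSqGrad, inner_add_left, real_inner_smul_left, e3_inner]
  field_simp
  ring

theorem norm_shiftNormSqGrad_sq {z : E3} (hz : z ≠ 0) :
    ‖shiftNormSqGrad z‖ ^ 2 = 4 * (5 * ‖z‖ + 3 * z 2) * (‖z‖ + z 2) := by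
  rw [shiftNormSqGrad, norm_add_sq_real, real_inner_smul_left, real_inner_smul_right,
    real_inner_comm, e3_inner, norm_smul, norm_smul, norm_e3]
  simp only [Real.norm_eq_abs, mul_pow, sq_abs, mul_one]
  have : ‖z‖ ≠ 0 := norm_ne_zero_iff.mpr hz
  field_simp
  ring

theorem norm_sq_eq_coords (z : E3) : ‖z‖ ^ 2 = z 0 ^ 2 + z 1 ^ 2 + z 2 ^ 2 := by
  simp [EuclideanSpace.norm_sq_eq, Fin.sum_univ_three]

theorem fderiv_shiftNormSq_single {x : E3} (hx : x ≠ 0) (i : Fin 3) :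
    fderiv ℝ shiftNormSq x (EuclideanSpace.single i 1) =
      (4 + 2 * x 2 / ‖x‖) * x i + 2 * ‖x‖ * e3 i := by
  simp [(hasFDerivAt_shiftNormSq hx).fderiv, EuclideanSpace.inner_single_right, shiftNormSqGrad]

theorem fderiv_fderiv_shiftNormSq_single {z : E3} (hz : z ≠ 0) (i : Fin 3) :
    fderiv ℝ (fun x => fderiv ℝ shiftNormSq x (EuclideanSpace.single i 1)) z
        (EuclideanSpace.single i 1) =
      2 * (e3 i / ‖z‖ - z 2 * z i / ‖z‖ ^ 3) * z i + (4 + 2 * z 2 / ‖z‖) +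
        2 * (z i / ‖z‖) * e3 i := by
  have hev : (fun x => fderiv ℝ shiftNormSq x (EuclideanSpace.single i 1)) =ᶠ[𝓝 z]
      fun x => (4 + 2 * (x 2 * ‖x‖⁻¹)) * x i + 2 * ‖x‖ * e3 i := by
    filter_upwards [isOpen_ne.mem_nhds hz] with x hx
    rw [fderiv_shiftNormSq_single hx i]
    ring
  have hnorm := hasFDerivAt_norm_of_ne_zero hz
  have hinv := (hasDerivAt_inv (norm_ne_zero_iff.mpr hz)).comp_hasFDerivAt z hnorm
  have hd : HasFDerivAt (fun x : E3 => (4 + 2 * (x 2 * ‖x‖⁻¹)) * x i + 2 * ‖x‖ * e3 i) _ z :=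
    (((((EuclideanSpace.proj (2 : Fin 3) : E3 →L[ℝ] ℝ).hasFDerivAt.mul hinv).const_mul 2).const_add
      4).mul (EuclideanSpace.proj i : E3 →L[ℝ] ℝ).hasFDerivAt).add
        ((hnorm.const_mul 2).mul_const (e3 i))
  rw [hev.fderiv_eq, hd.fderiv]
  fin_cases i <;> simp [EuclideanSpace.inner_single_right, e3] <;> field_simp <;> ring

theorem lap_shiftNormSq {z : E3} (hz : z ≠ 0) :
    lap shiftNormSq z = 4 * (3 * ‖z‖ + 2 * z 2) / ‖z‖ := by
  simp only [lap, fderiv_fderiv_shiftNormSq_single hz, Fin.sum_univ_three]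
  have hr : ‖z‖ ≠ 0 := norm_ne_zero_iff.mpr hz
  simp only [e3, ne_eq, Fin.reduceEq, not_false_eq_true, PiLp.single_eq_of_ne, PiLp.single_eq_same,
    zero_div, zero_sub, mul_neg, neg_mul, mul_zero, add_zero, one_div, mul_one]
  field_simp
  linear_combination (2 * z 2) * norm_sq_eq_coords z

def sqProfile (c t : ℝ) : ℝ := (1 - c * t ^ (-(1 / 8) : ℝ)) ^ 2

theorem contDiffAt_sqProfile (c : ℝ) {t : ℝ} (ht : 0 < t) : ContDiffAt ℝ 2 (sqProfile c) t :=
  (contDiffAt_const.sub (contDiffAt_const.mul (Real.contDiffAt_rpow_const_of_ne ht.ne'))).pow 2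

theorem hasDerivAt_rpow_neg_one_eighth {t : ℝ} (ht : 0 < t) :
    HasDerivAt (fun t : ℝ => t ^ (-(1 / 8) : ℝ)) (-(t ^ (-(1 / 8) : ℝ) / (8 * t))) t := by
  convert Real.hasDerivAt_rpow_const (p := -(1 / 8)) (Or.inl ht.ne') using 1
  rw [Real.rpow_sub_one ht.ne']
  ring

theorem hasDerivAt_sqProfile (c : ℝ) {t : ℝ} (ht : 0 < t) :
    HasDerivAt (sqProfile c)
      (c * t ^ (-(1 / 8) : ℝ) * (1 - c * t ^ (-(1 / 8) : ℝ)) / (4 * t)) t := by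
  refine ((((hasDerivAt_rpow_neg_one_eighth ht).const_mul c).const_sub 1).pow 2).congr_deriv ?_
  field_simp
  ring

theorem deriv_sqProfile (c : ℝ) {t : ℝ} (ht : 0 < t) :
    deriv (sqProfile c) t = c * t ^ (-(1 / 8) : ℝ) * (1 - c * t ^ (-(1 / 8) : ℝ)) / (4 * t) :=
  (hasDerivAt_sqProfile c ht).deriv

theorem deriv_deriv_sqProfile (c : ℝ) {t : ℝ} (ht : 0 < t) :
    deriv (deriv (sqProfile c)) t =
      c * t ^ (-(1 / 8) : ℝ) * (10 * (c * t ^ (-(1 / 8) : ℝ)) - 9) / (32 * t ^ 2) := by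
  have hev : deriv (sqProfile c) =ᶠ[𝓝 t]
      fun t => c * t ^ (-(1 / 8) : ℝ) * (1 - c * t ^ (-(1 / 8) : ℝ)) / (4 * t) := by
    filter_upwards [Ioi_mem_nhds ht] with x hx using deriv_sqProfile c hx
  have hs := hasDerivAt_rpow_neg_one_eighth ht
  have hd : HasDerivAt (fun t => c * t ^ (-(1 / 8) : ℝ) * (1 - c * t ^ (-(1 / 8) : ℝ)) / (4 * t))
      _ t := ((hs.const_mul c).mul ((hs.const_mul c).const_sub 1)).div
        ((hasDerivAt_id t).const_mul 4) (by positivity)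
  rw [hev.deriv_eq, hd.deriv]
  simp only [Pi.mul_apply]
  field_simp
  ring

theorem sq_mul_rpow_neg_five_halves_le {c r W : ℝ} (hc : 0 < c) (hr : 0 < r) (hW : 0 < W)
    (hWr : W ≤ 4 * r ^ 2) (hcs : c * W ^ (-(1 / 8) : ℝ) < 1) :
    1 / 50 * c ^ 2 * r ^ (-(5 / 2) : ℝ) ≤ 3 * (c * W ^ (-(1 / 8) : ℝ)) / (16 * W) := by
  -- With `W = a⁸` and `r = b⁴` the claim is polynomial: `c < a` and `a¹⁰ ≤ 8 b¹⁰`.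
  obtain ⟨a, ha, rfl⟩ : ∃ a, 0 < a ∧ a ^ 8 = W :=
    ⟨W ^ ((8 : ℕ)⁻¹ : ℝ), by positivity, Real.rpow_inv_natCast_pow hW.le (by norm_num)⟩
  obtain ⟨b, hb, rfl⟩ : ∃ b, 0 < b ∧ b ^ 4 = r :=
    ⟨r ^ ((4 : ℕ)⁻¹ : ℝ), by positivity, Real.rpow_inv_natCast_pow hr.le (by norm_num)⟩
  have hs : (a ^ 8) ^ (-(1 / 8) : ℝ) = a⁻¹ := by
    rw [← Real.rpow_natCast, ← Real.rpow_mul ha.le]; norm_num [Real.rpow_neg_one]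
  have hr' : (b ^ 4) ^ (-(5 / 2) : ℝ) = (b ^ 10)⁻¹ := by
    rw [← Real.rpow_natCast, ← Real.rpow_mul hb.le, ← Real.rpow_natCast, ← Real.rpow_neg hb.le]
    norm_num
  rw [hs] at hcs
  rw [hs, hr']
  have hca : c < a := by rwa [← div_eq_mul_inv, div_lt_one ha] at hcs
  have hab : a ^ 2 ≤ 2 * b ^ 2 := by
    refine le_of_pow_le_pow_left₀ (n := 4) (by norm_num) (by positivity) ?_
    nlinarith [pow_pos hb 8]
  have h10 : a ^ 10 ≤ 8 * b ^ 10 := by nlinarith [pow_pos ha 8, pow_pos hb 2]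
  field_simp
  nlinarith [mul_lt_mul_of_pos_right hca (pow_pos ha 9)]

/-- The right side is `g''(W) ‖∇W‖² + g'(W) ΔW` for `g = sqProfile c`, with `p = c W^{-1/8}`. -/
theorem three_mul_div_le_lap_formula {p r u W : ℝ} (hp : 0 ≤ p) (hr : 0 < r) (hu : 0 ≤ u)
    (hur : u ≤ r) (hW : W = 2 * r ^ 2 + 2 * r * u) :
    3 * p / (16 * W) ≤
      p * (10 * p - 9) / (32 * W ^ 2) * (4 * (5 * r + 3 * u) * (r + u)) +
        p * (1 - p) / (4 * W) * (4 * (3 * r + 2 * u) / r) := by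
  have hW0 : 0 < W := by rw [hW]; positivity
  have hsplit : p * (10 * p - 9) / (32 * W ^ 2) * (4 * (5 * r + 3 * u) * (r + u)) +
      p * (1 - p) / (4 * W) * (4 * (3 * r + 2 * u) / r) =
        3 * p / (16 * W) + p * (5 * u + 2 * p * (r - u)) / (16 * r * W) := by
    subst hW
    field_simp
    ring
  have hrest : 0 ≤ p * (5 * u + 2 * p * (r - u)) / (16 * r * W) :=
    div_nonneg (mul_nonneg hp (by nlinarith)) (by positivity)
  linarith

/-- Superharmonicity estimate for `φ²`, where `φ(y) = 1 - A^{1/4}|y + |y|e₃|^{-1/4}`. -/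
theorem stmt12 (A : ℝ) (hA : 0 < A) (φ : E3 → ℝ)
    (hφ : ∀ y : E3, 0 < y 2 →
      φ y = 1 - A ^ ((1 / 4 : ℝ)) * ‖y + ‖y‖ • e3‖ ^ (-(1 / 4) : ℝ)) :
    ∀ y : E3, 0 < y 2 → 0 < φ y →
      ContDiffAt ℝ 2 (fun z : E3 => φ z ^ 2) y ∧
      (1 / 50) * A ^ ((1 / 2 : ℝ)) * ‖y‖ ^ (-(5 / 2) : ℝ) ≤
        lap (fun z : E3 => φ z ^ 2) y := by
  intro y hy hφy
  set c := A ^ (1 / 4 : ℝ)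
  have hlocal : (fun z => φ z ^ 2) =ᶠ[𝓝 y] sqProfile c ∘ shiftNormSq := by
    have hopen : IsOpen {z : E3 | 0 < z 2} :=
      isOpen_lt continuous_const (EuclideanSpace.proj (2 : Fin 3)).continuous
    filter_upwards [hopen.mem_nhds hy] with z hz
    rw [Function.comp_apply, hφ z hz, norm_add_norm_smul_e3_rpow, sqProfile]
  have hy0 : y ≠ 0 := by rintro rfl; simp at hy
  have hr : 0 < ‖y‖ := norm_pos_iff.mpr hy0
  have hW := shiftNormSq_pos hy
  have hg := contDiffAt_sqProfile c hW
  have hw := contDiffAt_shiftNormSq hy0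
  refine ⟨(hg.comp y hw).congr_of_eventuallyEq hlocal, ?_⟩
  have hur : y 2 ≤ ‖y‖ := (le_abs_self _).trans (PiLp.norm_apply_le y 2)
  have hWr : shiftNormSq y ≤ 4 * ‖y‖ ^ 2 := by unfold shiftNormSq; nlinarith
  have hcs : c * shiftNormSq y ^ (-(1 / 8) : ℝ) < 1 := by
    rw [hφ y hy, norm_add_norm_smul_e3_rpow] at hφy
    linarith
  have hA2 : A ^ (1 / 2 : ℝ) = c ^ 2 := by
    rw [← Real.rpow_natCast, ← Real.rpow_mul hA.le]; norm_num
  rw [hlocal.lap_eq, lap_comp hg hw,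
    sum_fderiv_single_sq (hasFDerivAt_shiftNormSq hy0), norm_shiftNormSqGrad_sq hy0,
    lap_shiftNormSq hy0, deriv_sqProfile c hW, deriv_deriv_sqProfile c hW, hA2]
  exact (sq_mul_rpow_neg_five_halves_le (by positivity) hr hW hWr hcs).trans
    (three_mul_div_le_lap_formula (by positivity) hr hy.le hur rfl)
end
end

section
/- Let Λ > 0, 0 < m ≤ 1, T > Λ m², and 0 < R₁ < ρ. Let Ω = {y ∈ ℝ³ : y₃ > −T, R₁ < |y| < ρ} and let Γ = {y ∈ ℝ³ : y₃ = −T, R₁ < |y| < ρ} (the flat part of ∂Ω). Let u be continuous on the closure of Ω, C² in Ω, C¹ on Ω ∪ Γ, positive, with Δu ≤ 0 in Ω, ∂u/∂y₃ (y) ≤ Λ u(y)³ for every y ∈ Γ, and u(y) > m/|y| for every y ∈ ∂Ω \ Γ. Then u(y) > m/|y| for every y ∈ Ω. -/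
open Metric Set MeasureTheory

noncomputable section

/-- The half-annulus `Ω` at height `-T`. -/
def Om (T R₁ ρ : ℝ) : Set E3 := {y | -T < y 2 ∧ R₁ < ‖y‖ ∧ ‖y‖ < ρ}

/-- The flat boundary part `Γ` of `Ω`. -/
def Ga (T R₁ ρ : ℝ) : Set E3 := {y | y 2 = -T ∧ R₁ < ‖y‖ ∧ ‖y‖ < ρ}


/-!
Compare `u` with the barrier `m / ‖y‖ + ε ‖y‖²`, which is strictly subharmonic (`Δ = 6ε`, the
first term being harmonic). If `u ≤ m / ‖y‖` somewhere in `Ω`, then for small `ε > 0` the minimum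
of `u - barrier` over the compact set `closure Ω` is negative, so it is not attained on the curved
boundary, where `u - m / ‖y‖` has a positive lower bound. An interior minimum would force
`Δ (u - barrier) ≥ 0`, contradicting `Δ u ≤ 0`. A minimum at a point of `Γ` forces
`∂₃ barrier ≤ ∂₃ u ≤ Λ u³ < Λ barrier³`, whereas `T > Λ m²` gives `∂₃ barrier ≥ Λ barrier³` on `Γ`
for small `ε`.
-/

open Filter Topology InnerProductSpace Laplacian

theorem IsLocalMin.deriv_deriv_nonneg {g : ℝ → ℝ} {a : ℝ} (h : IsLocalMin g a)
    (hc : ContinuousAt g a) : 0 ≤ deriv (deriv g) a := by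
  by_contra! hneg
  -- the second-derivative test would make `a` a local maximum as well, so `g` is locally constant
  have hconst : g =ᶠ[𝓝 a] fun _ => g a :=
    (h.and (isLocalMax_of_deriv_deriv_neg hneg h.deriv_eq_zero hc)).mono
      fun _ hx => le_antisymm hx.2 hx.1
  have : deriv (deriv g) a = 0 := by
    rw [hconst.deriv.deriv_eq]
    simp
  exact hneg.ne this

theorem IsLocalMin.fderiv_fderiv_apply_nonneg {E : Type*} [NormedAddCommGroup E]
    [NormedSpace ℝ E] {w : E → ℝ} {z : E} (h : IsLocalMin w z) (hw : ContDiffAt ℝ 2 w z)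
    (v : E) : 0 ≤ fderiv ℝ (fun y => fderiv ℝ w y v) z v := by
  have hline : ∀ t : ℝ, HasDerivAt (fun t : ℝ => z + t • v) v t := fun t => by
    simpa using ((hasDerivAt_id t).smul_const v).const_add z
  have hz : z + (0 : ℝ) • v = z := by simp
  have hmin : IsLocalMin (fun t : ℝ => w (z + t • v)) 0 :=
    IsLocalMin.comp_continuous (g := fun t : ℝ => z + t • v) (by rwa [hz]) (hline 0).continuousAt
  have hdiff : ∀ᶠ y in 𝓝 z, DifferentiableAt ℝ w y :=
    (hw.eventually (by simp)).mono fun _ hy => hy.differentiableAt (by simp)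
  have hfirst : deriv (fun t : ℝ => w (z + t • v)) =ᶠ[𝓝 0] fun t => fderiv ℝ w (z + t • v) v := by
    filter_upwards [(hline 0).continuousAt.tendsto.eventually (hz ▸ hdiff)] with t ht
    exact (ht.hasFDerivAt.comp_hasDerivAt t (hline t)).deriv
  have hsecond : HasDerivAt (fun t : ℝ => fderiv ℝ w (z + t • v) v)
      (fderiv ℝ (fun y => fderiv ℝ w y v) z v) 0 :=
    (((hw.fderiv_right (m := 1) (by norm_num)).differentiableAt (by norm_num)).clm_apply
      (differentiableAt_const v)).hasFDerivAt.comp_hasDerivAt_of_eq 0 (hline 0) hz.symm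
  simpa only [hfirst.deriv_eq, hsecond.deriv] using
    hmin.deriv_deriv_nonneg (hw.continuousAt.comp_of_eq (hline 0).continuousAt hz)

theorem lap_eq_laplacian {f : E3 → ℝ} {x : E3} (hf : ContDiffAt ℝ 2 f x) : lap f x = Δ f x := by
  have hd : DifferentiableAt ℝ (fderiv ℝ f) x :=
    (hf.fderiv_right (m := 1) (by norm_num)).differentiableAt (by norm_num)
  rw [laplacian_eq_iteratedFDeriv_orthonormalBasis f (EuclideanSpace.basisFun (Fin 3) ℝ), lap]
  refine Finset.sum_congr rfl fun i _ => ?_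
  rw [iteratedFDeriv_two_apply, fderiv_clm_apply hd (differentiableAt_const _)]
  simp

theorem lap_sub {f g : E3 → ℝ} {x : E3} (hf : ContDiffAt ℝ 2 f x) (hg : ContDiffAt ℝ 2 g x) :
    lap (f - g) x = lap f x - lap g x := by
  rw [lap_eq_laplacian hf, lap_eq_laplacian hg, lap_eq_laplacian (f := f - g) (hf.sub hg),
    hf.laplacian_sub hg]

theorem IsLocalMin.lap_nonneg {w : E3 → ℝ} {z : E3} (h : IsLocalMin w z)
    (hw : ContDiffAt ℝ 2 w z) : 0 ≤ lap w z :=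
  Finset.sum_nonneg fun _ _ => h.fderiv_fderiv_apply_nonneg hw _

theorem lap_comp_norm_sq {g g' : ℝ → ℝ} {g'' : ℝ} {x : E3}
    (hg : ∀ᶠ s in 𝓝 (‖x‖ ^ 2), HasDerivAt g (g' s) s) (hg' : HasDerivAt g' g'' (‖x‖ ^ 2)) :
    lap (fun y => g (‖y‖ ^ 2)) x = 4 * ‖x‖ ^ 2 * g'' + 6 * g' (‖x‖ ^ 2) := by
  have hnear : ∀ᶠ y in 𝓝 x, HasDerivAt g (g' (‖y‖ ^ 2)) (‖y‖ ^ 2) :=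
    ((continuous_norm.pow 2).tendsto x).eventually hg
  have hfirst : ∀ i, (fun y => fderiv ℝ (fun y => g (‖y‖ ^ 2)) y (EuclideanSpace.single i 1))
      =ᶠ[𝓝 x] fun y => g' (‖y‖ ^ 2) * (2 * y i) := by
    intro i
    filter_upwards [hnear] with y hy
    have : HasFDerivAt (fun y => g (‖y‖ ^ 2)) (g' (‖y‖ ^ 2) • 2 • innerSL ℝ y) y :=
      hy.comp_hasFDerivAt y (hasStrictFDerivAt_norm_sq y).hasFDerivAt
    rw [this.fderiv]
    simp [EuclideanSpace.inner_single_right]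
  have hsecond : ∀ i, HasFDerivAt (fun y : E3 => g' (‖y‖ ^ 2) * (2 * y i))
      (g' (‖x‖ ^ 2) • (2 : ℝ) • EuclideanSpace.proj (𝕜 := ℝ) i
        + (2 * x i) • g'' • (2 • innerSL ℝ x)) x := fun i =>
    (hg'.comp_hasFDerivAt x (hasStrictFDerivAt_norm_sq x).hasFDerivAt).mul
      ((EuclideanSpace.proj (𝕜 := ℝ) i).hasFDerivAt.const_mul (2 : ℝ))
  rw [lap, Finset.sum_congr rfl fun i _ => by rw [(hfirst i).fderiv_eq, (hsecond i).fderiv]]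
  simp [EuclideanSpace.inner_single_right, EuclideanSpace.real_norm_sq_eq, Fin.sum_univ_three]
  ring

theorem sq_rpow_div_two {r : ℝ} (hr : 0 ≤ r) (a : ℝ) : (r ^ 2) ^ (a / 2) = r ^ a := by
  rw [← Real.rpow_natCast, ← Real.rpow_mul hr]
  congr 1
  ring

def barrier (m ε : ℝ) (y : E3) : ℝ := m / ‖y‖ + ε * ‖y‖ ^ 2

theorem barrier_eq_comp_norm_sq (m ε : ℝ) :
    barrier m ε = fun y => m * (‖y‖ ^ 2) ^ (-1 / 2 : ℝ) + ε * ‖y‖ ^ 2 := by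
  ext y
  rw [barrier, sq_rpow_div_two (norm_nonneg y), Real.rpow_neg_one, div_eq_mul_inv]

theorem hasDerivAt_barrier_profile (m ε : ℝ) {s : ℝ} (hs : s ≠ 0) :
    HasDerivAt (fun s => m * s ^ (-1 / 2 : ℝ) + ε * s) (m * (-1 / 2 * s ^ (-3 / 2 : ℝ)) + ε) s :=
  (((Real.hasDerivAt_rpow_const (Or.inl hs)).const_mul m).add
    ((hasDerivAt_id s).const_mul ε)).congr_deriv (by norm_num)

theorem contDiffAt_barrier (m ε : ℝ) {x : E3} (hx : x ≠ 0) :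
    ContDiffAt ℝ 2 (barrier m ε) x := by
  unfold barrier
  have := contDiffAt_norm ℝ hx (n := 2)
  fun_prop (disch := simpa)

theorem hasFDerivAt_barrier (m ε : ℝ) {x : E3} (hx : x ≠ 0) :
    HasFDerivAt (barrier m ε) ((2 * ε - m / ‖x‖ ^ 3) • innerSL ℝ x) x := by
  have hs : ‖x‖ ^ 2 ≠ 0 := by positivity
  rw [barrier_eq_comp_norm_sq]
  refine ((hasDerivAt_barrier_profile m ε hs).comp_hasFDerivAt x
    (hasStrictFDerivAt_norm_sq x).hasFDerivAt).congr_fderiv ?_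
  rw [sq_rpow_div_two (norm_nonneg x), Real.rpow_neg (norm_nonneg x)]
  ext v
  simp
  ring

theorem lap_barrier (m ε : ℝ) {x : E3} (hx : x ≠ 0) : lap (barrier m ε) x = 6 * ε := by
  have hs : ‖x‖ ^ 2 ≠ 0 := by positivity
  have hg' : HasDerivAt (fun s => m * (-1 / 2 * s ^ (-3 / 2 : ℝ)) + ε)
      (m * (-1 / 2 * (-3 / 2 * (‖x‖ ^ 2) ^ (-5 / 2 : ℝ)))) (‖x‖ ^ 2) :=
    ((((Real.hasDerivAt_rpow_const (Or.inl hs)).const_mul (-1 / 2)).const_mul m).add_const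
      ε).congr_deriv (by norm_num)
  rw [barrier_eq_comp_norm_sq, lap_comp_norm_sq
    ((eventually_ne_nhds hs).mono fun _ => hasDerivAt_barrier_profile m ε) hg']
  have : ‖x‖ ^ 2 * (‖x‖ ^ 2) ^ (-5 / 2 : ℝ) = (‖x‖ ^ 2) ^ (-3 / 2 : ℝ) := by
    rw [mul_comm, ← Real.rpow_add_one hs]
    norm_num
  linear_combination 3 * m * this

theorem not_isLocalMin_sub_barrier {u : E3 → ℝ} {z : E3} {m ε : ℝ} (hu : ContDiffAt ℝ 2 u z)
    (hlap : lap u z ≤ 0) (hz : z ≠ 0) (hε : 0 < ε) : ¬IsLocalMin (u - barrier m ε) z := by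
  intro hmin
  have hb := contDiffAt_barrier m ε hz
  have := hmin.lap_nonneg (hu.sub hb)
  rw [lap_sub hu hb, lap_barrier m ε hz] at this
  linarith

theorem mul_barrier_pow_three_le_fderiv_e3 {Λ m ε T ρ : ℝ} {z : E3} (hΛ : 0 ≤ Λ) (hε : 0 ≤ ε)
    (hT : 0 ≤ T) (hz : 0 < ‖z‖) (hzρ : ‖z‖ ≤ ρ) (hz2 : z 2 = -T)
    (hsmall : Λ * (m + ε * ρ ^ 3) ^ 3 + 2 * ε * T * ρ ^ 3 ≤ m * T) :
    Λ * barrier m ε z ^ 3 ≤ fderiv ℝ (barrier m ε) z e3 := by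
  have hr3 : 0 < ‖z‖ ^ 3 := by positivity
  have hfd : fderiv ℝ (barrier m ε) z e3 = (m * T - 2 * ε * T * ‖z‖ ^ 3) / ‖z‖ ^ 3 := by
    rw [(hasFDerivAt_barrier m ε (norm_pos_iff.1 hz)).fderiv]
    simp [e3, EuclideanSpace.inner_single_right, hz2]
    field_simp
    ring
  have hb : barrier m ε z ^ 3 = (m + ε * ‖z‖ ^ 3) ^ 3 / ‖z‖ ^ 3 := by
    rw [barrier, ← div_pow]
    congr 1
    field_simp
  have hcube : (m + ε * ‖z‖ ^ 3) ^ 3 ≤ (m + ε * ρ ^ 3) ^ 3 :=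
    (Odd.strictMono_pow (by decide)).monotone (by gcongr)
  rw [hfd, hb, mul_div_assoc', div_le_div_iff_of_pos_right hr3]
  linarith [mul_le_mul_of_nonneg_left hcube hΛ,
    mul_le_mul_of_nonneg_left (pow_le_pow_left₀ hz.le hzρ 3) (by positivity : 0 ≤ 2 * ε * T)]

theorem exists_barrier_eps {Λ m T ρ c : ℝ} (hc : 0 < c) (h : Λ * m ^ 3 < m * T) :
    ∃ ε > 0, ε * ρ ^ 2 < c ∧ Λ * (m + ε * ρ ^ 3) ^ 3 + 2 * ε * T * ρ ^ 3 < m * T := by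
  have h₁ : ∀ᶠ ε in 𝓝 (0 : ℝ), ε * ρ ^ 2 < c :=
    ContinuousAt.eventually_lt (by fun_prop) continuousAt_const (by simpa)
  have h₂ : ∀ᶠ ε in 𝓝 (0 : ℝ), Λ * (m + ε * ρ ^ 3) ^ 3 + 2 * ε * T * ρ ^ 3 < m * T :=
    ContinuousAt.eventually_lt (by fun_prop) continuousAt_const (by simpa)
  obtain ⟨ε, ⟨hε₁, hε₂⟩, hε⟩ :=
    ((h₁.and h₂).filter_mono nhdsWithin_le_nhds).and (self_mem_nhdsWithin (s := Ioi 0)) |>.exists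
  exact ⟨ε, hε, hε₁, hε₂⟩

section Geometry

variable {T R₁ ρ : ℝ}

theorem isOpen_shell : IsOpen {y : E3 | R₁ < ‖y‖ ∧ ‖y‖ < ρ} :=
  (isOpen_lt continuous_const continuous_norm).inter (isOpen_lt continuous_norm continuous_const)

theorem isOpen_Om : IsOpen (Om T R₁ ρ) :=
  (isOpen_lt continuous_const (EuclideanSpace.proj (𝕜 := ℝ) (2 : Fin 3)).continuous).inter
    isOpen_shell

theorem closure_Om_subset :
    closure (Om T R₁ ρ) ⊆ {y | -T ≤ y 2 ∧ R₁ ≤ ‖y‖ ∧ ‖y‖ ≤ ρ} :=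
  closure_minimal (fun _ hy => ⟨hy.1.le, hy.2.1.le, hy.2.2.le⟩)
    ((isClosed_le continuous_const (EuclideanSpace.proj (𝕜 := ℝ) (2 : Fin 3)).continuous).inter
      ((isClosed_le continuous_const continuous_norm).inter
        (isClosed_le continuous_norm continuous_const)))

theorem norm_pos_of_mem_closure_Om (hR₁ : 0 < R₁) {y : E3} (hy : y ∈ closure (Om T R₁ ρ)) :
    0 < ‖y‖ :=
  hR₁.trans_le (closure_Om_subset hy).2.1

theorem isCompact_closure_Om : IsCompact (closure (Om T R₁ ρ)) :=
  (isCompact_closedBall (0 : E3) ρ).closure_of_subset fun _ hy =>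
    mem_closedBall_zero_iff.2 hy.2.2.le

theorem eventually_add_smul_e3_mem_Om {z : E3} (hz : z ∈ Ga T R₁ ρ) :
    ∀ᶠ t in 𝓝[>] (0 : ℝ), z + t • e3 ∈ Om T R₁ ρ := by
  have hline : Continuous fun t : ℝ => z + t • e3 := by fun_prop
  have hshell : ∀ᶠ t in 𝓝 (0 : ℝ), z + t • e3 ∈ {y : E3 | R₁ < ‖y‖ ∧ ‖y‖ < ρ} :=
    hline.continuousAt.preimage_mem_nhds (isOpen_shell.mem_nhds (by simpa using hz.2))
  filter_upwards [nhdsWithin_le_nhds hshell, self_mem_nhdsWithin] with t ht ht0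
  refine ⟨?_, ht⟩
  simp [e3, hz.1]
  exact ht0

theorem Ga_subset_closure_Om : Ga T R₁ ρ ⊆ closure (Om T R₁ ρ) := fun z hz =>
  mem_closure_of_tendsto
    ((Continuous.tendsto' (by fun_prop) 0 z (by simp)).mono_left nhdsWithin_le_nhds)
    (eventually_add_smul_e3_mem_Om hz)

theorem Om_union_Ga_subset_closure_Om : Om T R₁ ρ ∪ Ga T R₁ ρ ⊆ closure (Om T R₁ ρ) :=
  union_subset subset_closure Ga_subset_closure_Om

theorem Om_union_Ga_eq :
    Om T R₁ ρ ∪ Ga T R₁ ρ = closure (Om T R₁ ρ) ∩ {y | R₁ < ‖y‖ ∧ ‖y‖ < ρ} := by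
  refine Subset.antisymm (subset_inter Om_union_Ga_subset_closure_Om
    (union_subset (fun _ hy => hy.2) fun _ hy => hy.2)) fun y ⟨hyC, hy⟩ => ?_
  rcases (closure_Om_subset hyC).1.lt_or_eq with h | h
  · exact Or.inl ⟨h, hy⟩
  · exact Or.inr ⟨h.symm, hy⟩

theorem isCompact_closure_Om_diff :
    IsCompact (closure (Om T R₁ ρ) \ (Om T R₁ ρ ∪ Ga T R₁ ρ)) := by
  rw [Om_union_Ga_eq, sdiff_self_inter]
  exact isCompact_closure_Om.diff isOpen_shell

theorem e3_mem_posTangentConeAt {z : E3} (hz : z ∈ Ga T R₁ ρ) :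
    e3 ∈ posTangentConeAt (Om T R₁ ρ ∪ Ga T R₁ ρ) z :=
  mem_posTangentConeAt_of_frequently_mem
    ((eventually_add_smul_e3_mem_Om hz).frequently.mono fun _ h => Or.inl h)

end Geometry

theorem fderiv_e3_le_of_isMinOn_sub {T R₁ ρ : ℝ} {u φ : E3 → ℝ} {z : E3} (hz : z ∈ Ga T R₁ ρ)
    (hmin : IsMinOn (u - φ) (Om T R₁ ρ ∪ Ga T R₁ ρ) z)
    (hu : DifferentiableWithinAt ℝ u (Om T R₁ ρ ∪ Ga T R₁ ρ) z) (hφ : DifferentiableAt ℝ φ z) :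
    fderiv ℝ φ z e3 ≤ fderivWithin ℝ u (Om T R₁ ρ ∪ Ga T R₁ ρ) z e3 := by
  have := hmin.localize.hasFDerivWithinAt_nonneg
    (hu.hasFDerivWithinAt.sub hφ.hasFDerivAt.hasFDerivWithinAt) (e3_mem_posTangentConeAt hz)
  simpa using this

theorem exists_pos_le_sub_on_outer_boundary {T R₁ ρ m : ℝ} {u : E3 → ℝ} (hR₁ : 0 < R₁)
    (hcont : ContinuousOn u (closure (Om T R₁ ρ)))
    (hout : ∀ y ∈ closure (Om T R₁ ρ) \ (Om T R₁ ρ ∪ Ga T R₁ ρ), m / ‖y‖ < u y) :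
    ∃ c > 0, ∀ y ∈ closure (Om T R₁ ρ) \ (Om T R₁ ρ ∪ Ga T R₁ ρ), c ≤ u y - m / ‖y‖ :=
  isCompact_closure_Om_diff.exists_forall_le' (f := fun y => u y - m / ‖y‖)
    ((hcont.mono sdiff_subset).sub (continuousOn_const.div continuous_norm.continuousOn
      fun _ hy => (norm_pos_of_mem_closure_Om hR₁ hy.1).ne')) fun y hy => sub_pos.2 (hout y hy)

theorem exists_isMinOn_sub_barrier {T R₁ ρ m ε c : ℝ} {u : E3 → ℝ} (hR₁ : 0 < R₁)
    (hcont : ContinuousOn u (closure (Om T R₁ ρ)))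
    (hc : ∀ y ∈ closure (Om T R₁ ρ) \ (Om T R₁ ρ ∪ Ga T R₁ ρ), c ≤ u y - m / ‖y‖)
    (hε : 0 < ε) (hεc : ε * ρ ^ 2 < c) {y₀ : E3} (hy₀ : y₀ ∈ Om T R₁ ρ)
    (hy₀u : u y₀ ≤ m / ‖y₀‖) :
    ∃ z ∈ Om T R₁ ρ ∪ Ga T R₁ ρ,
      IsMinOn (u - barrier m ε) (closure (Om T R₁ ρ)) z ∧ u z < barrier m ε z := by
  have hnorm {y} (hy : y ∈ closure (Om T R₁ ρ)) : 0 < ‖y‖ := norm_pos_of_mem_closure_Om hR₁ hy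
  obtain ⟨z, hzC, hzmin⟩ := isCompact_closure_Om.exists_isMinOn ⟨y₀, subset_closure hy₀⟩
    (hcont.sub fun y hy =>
      (contDiffAt_barrier m ε (norm_pos_iff.1 (hnorm hy))).continuousAt.continuousWithinAt)
  have hzneg : u z < barrier m ε z := by
    have hmin : u z - barrier m ε z ≤ u y₀ - barrier m ε y₀ := hzmin (subset_closure hy₀)
    have : 0 < ε * ‖y₀‖ ^ 2 := by have := hnorm (subset_closure hy₀); positivity
    simp only [barrier] at hmin ⊢
    linarith
  refine ⟨z, ?_, hzmin, hzneg⟩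
  by_contra hzS
  have hcz := hc z ⟨hzC, hzS⟩
  have : ε * ‖z‖ ^ 2 ≤ ε * ρ ^ 2 := by
    gcongr
    exact (closure_Om_subset hzC).2.2
  simp only [barrier] at hzneg
  linarith

theorem stmt16_general (Λ m T R₁ ρ : ℝ) (hΛ : 0 < Λ) (hm0 : 0 < m)
    (hT : Λ * m ^ 2 < T) (hR₁ : 0 < R₁) (u : E3 → ℝ)
    (hcont : ContinuousOn u (closure (Om T R₁ ρ)))
    (hC2 : ContDiffOn ℝ 2 u (Om T R₁ ρ))
    (hC1 : ContDiffOn ℝ 1 u (Om T R₁ ρ ∪ Ga T R₁ ρ))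
    (hsuper : ∀ y ∈ Om T R₁ ρ, lap u y ≤ 0)
    (hbdry : ∀ y ∈ Ga T R₁ ρ,
      fderivWithin ℝ u (Om T R₁ ρ ∪ Ga T R₁ ρ) y e3 ≤ Λ * u y ^ 3)
    (hout : ∀ y ∈ closure (Om T R₁ ρ) \ (Om T R₁ ρ ∪ Ga T R₁ ρ), m / ‖y‖ < u y) :
    ∀ y ∈ Om T R₁ ρ, m / ‖y‖ < u y := by
  intro y₀ hy₀
  by_contra! hy₀u
  obtain ⟨c, hc, hcu⟩ := exists_pos_le_sub_on_outer_boundary hR₁ hcont hout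
  obtain ⟨ε, hε, hεc, hεT⟩ := exists_barrier_eps (ρ := ρ) hc
    (by linarith [mul_lt_mul_of_pos_left hT hm0] : Λ * m ^ 3 < m * T)
  obtain ⟨z, hzS, hzmin, hzneg⟩ := exists_isMinOn_sub_barrier hR₁ hcont hcu hε hεc hy₀ hy₀u
  have hzC : z ∈ closure (Om T R₁ ρ) := Om_union_Ga_subset_closure_Om hzS
  have hz : 0 < ‖z‖ := norm_pos_of_mem_closure_Om hR₁ hzC
  have hz0 : z ≠ 0 := norm_pos_iff.1 hz
  rcases hzS with hzΩ | hzΓ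
  · have hΩ := isOpen_Om.mem_nhds hzΩ
    exact not_isLocalMin_sub_barrier ((hC2 z hzΩ).contDiffAt hΩ) (hsuper z hzΩ) hz0 hε
      (hzmin.isLocalMin (mem_of_superset hΩ subset_closure))
  · have hslope := fderiv_e3_le_of_isMinOn_sub hzΓ
      (hzmin.on_subset Om_union_Ga_subset_closure_Om)
      ((hC1 z (Or.inr hzΓ)).differentiableWithinAt one_ne_zero)
      ((contDiffAt_barrier m ε hz0).differentiableAt two_ne_zero)
    have hbarrier := mul_barrier_pow_three_le_fderiv_e3 hΛ.le hε.le
      ((by positivity : 0 ≤ Λ * m ^ 2).trans hT.le) hz (closure_Om_subset hzC).2.2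
      hzΓ.1 hεT.le
    have hcube : Λ * u z ^ 3 < Λ * barrier m ε z ^ 3 :=
      mul_lt_mul_of_pos_left (Odd.strictMono_pow (by decide) hzneg) hΛ
    linarith [hbdry z hzΓ]

/-- Maximum-principle claim underlying Lemma mar26lem1. -/
theorem stmt16 (Λ m T R₁ ρ : ℝ) (hΛ : 0 < Λ) (hm0 : 0 < m) (hm1 : m ≤ 1)
    (hT : Λ * m ^ 2 < T) (hR₁ : 0 < R₁) (hρ : R₁ < ρ) (u : E3 → ℝ)
    (hcont : ContinuousOn u (closure (Om T R₁ ρ)))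
    (hC2 : ContDiffOn ℝ 2 u (Om T R₁ ρ))
    (hC1 : ContDiffOn ℝ 1 u (Om T R₁ ρ ∪ Ga T R₁ ρ))
    (hpos : ∀ y ∈ closure (Om T R₁ ρ), 0 < u y)
    (hsuper : ∀ y ∈ Om T R₁ ρ, lap u y ≤ 0)
    (hbdry : ∀ y ∈ Ga T R₁ ρ,
      fderivWithin ℝ u (Om T R₁ ρ ∪ Ga T R₁ ρ) y e3 ≤ Λ * u y ^ 3)
    (hout : ∀ y ∈ closure (Om T R₁ ρ) \ (Om T R₁ ρ ∪ Ga T R₁ ρ), m / ‖y‖ < u y) :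
    ∀ y ∈ Om T R₁ ρ, m / ‖y‖ < u y :=
  stmt16_general Λ m T R₁ ρ hΛ hm0 hT hR₁ u hcont hC2 hC1 hsuper hbdry hout
end
end
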